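/- arXiv:math/0211217 — 2 statements merged into one kernel-verified Lean document; each statement's English description precedes it below -/
import Mathlib

section
/- For nonnegative integers l, k, the product of twisted powers expands as (x-ξ)_{q,l} · (x-ξ)_{q,k} = Σ_{n=0}^{l+k} C(l, n-k)_q · (q^k - 1)_{q, l+k-n} · ξ^{l+k-n} · (x-ξ)_{q,n}, where (a)_{q,m} := (a-1)(a-q)···(a-q^{m-1}) evaluated appropriately (i.e. (q^k-1)_{q,m} = (q^k-1)(q^k-q)···(q^k-q^{m-1})). -/
open Polynomial

/-- The q-integer `[n]_q = 1 + q + ... + q^{n-1}`. -/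
def qInt {K : Type*} [Field K] (q : K) (n : ℕ) : K := ∑ i ∈ Finset.range n, q ^ i

/-- The q-factorial `[n]_q^! = [1]_q ⋯ [n]_q`. -/
def qFact {K : Type*} [Field K] (q : K) : ℕ → K
  | 0 => 1
  | n + 1 => qFact q n * qInt q (n + 1)

/-- The Gaussian binomial coefficient `C(n,i)_q`, taken to be 0 when `i > n`. -/
def qChoose {K : Type*} [Field K] (q : K) (n i : ℕ) : K :=
  if i ≤ n then qFact q n / (qFact q (n - i) * qFact q i) else 0

/-- The twisted power `(x-ξ)_{q,n} = (x-ξ)(x-qξ)⋯(x-q^{n-1}ξ)`. -/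
noncomputable def twPow {K : Type*} [Field K] (q ξ : K) (n : ℕ) : Polynomial K :=
  ∏ i ∈ Finset.range n, (Polynomial.X - Polynomial.C (q ^ i * ξ))

section Aux
variable {K : Type*} [Field K] [CharZero K] (q ξ : K)

lemma qInt_ne_zero (hq : ∀ m : ℕ, 0 < m → q ^ m ≠ 1) (n : ℕ) (hn : 0 < n) :
    qInt q n ≠ 0 := by
  have hq1 : q ≠ 1 := by
    intro h; exact hq 1 one_pos (by simp [h])
  rw [qInt, geom_sum_eq hq1]
  have := hq n hn
  have h2 : q - 1 ≠ 0 := sub_ne_zero.mpr hq1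
  exact div_ne_zero (sub_ne_zero.mpr this) h2

lemma qFact_ne_zero (hq : ∀ m : ℕ, 0 < m → q ^ m ≠ 1) (n : ℕ) : qFact q n ≠ 0 := by
  induction n with
  | zero => simp [qFact]
  | succ n ih => exact mul_ne_zero ih (qInt_ne_zero q hq (n + 1) n.succ_pos)

lemma qInt_split (j m : ℕ) :
    qInt q (j + 1 + m) = qInt q (j + 1) + q ^ (j + 1) * qInt q m := by
  simp only [qInt, Finset.sum_range_add, pow_add, Finset.mul_sum]

lemma qChoose_zero (hq : ∀ m : ℕ, 0 < m → q ^ m ≠ 1) (l : ℕ) : qChoose q l 0 = 1 := by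
  simp [qChoose, qFact, div_self, qFact_ne_zero q hq l]

lemma qChoose_pascal (hq : ∀ m : ℕ, 0 < m → q ^ m ≠ 1) (l j : ℕ) :
    qChoose q (l + 1) (j + 1) = qChoose q l j + q ^ (j + 1) * qChoose q l (j + 1) := by
  rcases le_or_gt (j + 1) l with h | h
  · obtain ⟨m, rfl⟩ : ∃ m, l = j + 1 + m := ⟨l - (j + 1), by omega⟩
    have e1 : j + 1 + m - (j + 1) = m := by omega
    have e2 : j + 1 + m - j = m + 1 := by omega
    have e3 : j + 1 + m + 1 - (j + 1) = m + 1 := by omega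
    rw [qChoose, qChoose, qChoose, if_pos (by omega), if_pos (by omega), if_pos (by omega),
      e1, e2, e3]
    have hF := qFact_ne_zero q hq
    have key : qInt q (j + 1 + m + 1) = qInt q (j + 1) + q ^ (j + 1) * qInt q (m + 1) := by
      have : j + 1 + m + 1 = j + 1 + (m + 1) := by ring
      rw [this, qInt_split]
    show qFact q (j + 1 + m + 1) / (qFact q (m + 1) * qFact q (j + 1)) = _
    have h1 : qFact q (j + 1 + m + 1) = qFact q (j + 1 + m) * qInt q (j + 1 + m + 1) := rfl
    have h2 : qFact q (m + 1) = qFact q m * qInt q (m + 1) := rfl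
    have h3 : qFact q (j + 1) = qFact q j * qInt q (j + 1) := rfl
    have hA : qFact q j ≠ 0 := hF j
    have hB : qFact q m ≠ 0 := hF m
    have hI1 : qInt q (j + 1) ≠ 0 := qInt_ne_zero q hq _ (by omega)
    have hI2 : qInt q (m + 1) ≠ 0 := qInt_ne_zero q hq _ (by omega)
    rw [h1, key, h2, h3]
    field_simp
  · rcases eq_or_lt_of_le (by omega : l ≤ j) with rfl | hlt
    · have e0 : l + 1 - (l + 1) = 0 := by omega
      rw [qChoose, qChoose, qChoose, if_pos le_rfl, if_pos le_rfl, if_neg (by omega), e0,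
        Nat.sub_self]
      have hF := qFact_ne_zero q hq
      show qFact q (l + 1) / (qFact q 0 * qFact q (l + 1)) =
        qFact q l / (qFact q 0 * qFact q l) + q ^ (l + 1) * 0
      show qFact q (l + 1) / (1 * qFact q (l + 1)) =
        qFact q l / (1 * qFact q l) + q ^ (l + 1) * 0
      rw [one_mul, one_mul, div_self (hF (l + 1)), div_self (hF l), mul_zero, add_zero]
    · rw [qChoose, qChoose, qChoose, if_neg (by omega), if_neg (by omega), if_neg (by omega)]
      ring

/-- The coefficient appearing in the expansion. -/
def coefC (l k n : ℕ) : K :=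
  (if k ≤ n then qChoose q l (n - k) else 0) *
    (∏ i ∈ Finset.range (l + k - n), (q ^ k - q ^ i)) * ξ ^ (l + k - n)

lemma coefC_top (l k : ℕ) : coefC q ξ l k (l + k + 1) = 0 := by
  rcases le_or_gt k (l + k + 1) with h | h
  · rw [coefC, if_pos h, qChoose, if_neg (by omega)]; ring
  · omega

lemma coefC_zero_succ (hq : ∀ m : ℕ, 0 < m → q ^ m ≠ 1) (l k : ℕ) :
    coefC q ξ (l + 1) k 0 = coefC q ξ l k 0 * ((q ^ 0 - q ^ l) * ξ) := by
  rcases Nat.eq_zero_or_pos k with rfl | hk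
  · simp only [coefC, if_pos (le_refl 0), Nat.sub_zero, Nat.add_zero]
    rw [Finset.prod_range_succ, qChoose_zero q hq, qChoose_zero q hq]
    ring
  · rw [coefC, coefC, if_neg (by omega), if_neg (by omega)]; ring

lemma coefC_key (hq : ∀ m : ℕ, 0 < m → q ^ m ≠ 1) (l k n : ℕ) :
    coefC q ξ (l + 1) k (n + 1) =
      coefC q ξ l k n + coefC q ξ l k (n + 1) * ((q ^ (n + 1) - q ^ l) * ξ) := by
  rcases lt_or_ge n k with hk | hk
  · rcases eq_or_ne k (n + 1) with hkn | hkn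
    · -- k = n + 1
      subst hkn
      have e1 : n + 1 - (n + 1) = 0 := by omega
      have e2 : l + 1 + (n + 1) - (n + 1) = l + 1 := by omega
      have e3 : l + (n + 1) - (n + 1) = l := by omega
      rw [coefC, coefC, coefC, if_pos le_rfl, if_pos le_rfl, if_neg (by omega), e1, e2, e3,
        qChoose_zero q hq, qChoose_zero q hq, Finset.prod_range_succ]
      ring
    · rw [coefC, coefC, coefC, if_neg (by omega), if_neg (by omega), if_neg (by omega)]; ring
  · -- k ≤ n
    obtain ⟨j, rfl⟩ : ∃ j, n = k + j := ⟨n - k, by omega⟩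
    have e1 : k + j + 1 - k = j + 1 := by omega
    have e2 : k + j - k = j := by omega
    rcases le_or_gt j l with hjl | hjl
    · obtain ⟨m, rfl⟩ : ∃ m, l = j + m := ⟨l - j, by omega⟩
      have e3 : j + m + 1 + k - (k + j + 1) = m := by omega
      have e4 : j + m + k - (k + j) = m := by omega
      rw [coefC, coefC, coefC, if_pos (by omega), if_pos (by omega), if_pos (by omega),
        e1, e2, e3, e4, qChoose_pascal q hq]
      rcases Nat.eq_zero_or_pos m with rfl | hm
      · have hz : qChoose q j (j + 1) = 0 := by rw [qChoose, if_neg (by omega)]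
        have e6 : j + k - (k + j + 1) = 0 := by omega
        simp only [Nat.add_zero] at *
        rw [e6, hz]
        simp
      · obtain ⟨m', rfl⟩ : ∃ m', m = m' + 1 := ⟨m - 1, by omega⟩
        have e5 : j + (m' + 1) + k - (k + j + 1) = m' := by omega
        rw [e5, Finset.prod_range_succ]
        have hpow : q ^ (k + j + 1) - q ^ (j + (m' + 1)) =
            q ^ (j + 1) * (q ^ k - q ^ m') := by
          have p1 : k + j + 1 = j + 1 + k := by omega
          have p2 : j + (m' + 1) = j + 1 + m' := by omega
          rw [p1, p2, mul_sub, ← pow_add, ← pow_add]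
        rw [hpow]
        ring
    · have c1 : qChoose q (l + 1) (j + 1) = 0 := by rw [qChoose, if_neg (by omega)]
      have c2 : qChoose q l j = 0 := by rw [qChoose, if_neg (by omega)]
      have c3 : qChoose q l (j + 1) = 0 := by rw [qChoose, if_neg (by omega)]
      rw [coefC, coefC, coefC, if_pos (by omega), if_pos (by omega), if_pos (by omega),
        e1, e2, c1, c2, c3]
      ring

lemma twPow_succ (n : ℕ) :
    twPow q ξ (n + 1) = twPow q ξ n * (X - C (q ^ n * ξ)) := Finset.prod_range_succ _ _

lemma twPow_mul_lin (l n : ℕ) :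
    twPow q ξ n * (X - C (q ^ l * ξ)) =
      twPow q ξ (n + 1) + C ((q ^ n - q ^ l) * ξ) * twPow q ξ n := by
  rw [twPow_succ]
  have : (X - C (q ^ l * ξ) : Polynomial K) =
      (X - C (q ^ n * ξ)) + C ((q ^ n - q ^ l) * ξ) := by
    rw [sub_mul, map_sub, map_mul, map_mul]; ring
  rw [this]
  ring

end Aux

/-- Product expansion of twisted powers:
`(x-ξ)_{q,l} (x-ξ)_{q,k} = Σ_{n=0}^{l+k} C(l,n-k)_q (q^k-1)_{q,l+k-n} ξ^{l+k-n} (x-ξ)_{q,n}`,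
where `(q^k-1)_{q,m} = ∏_{i=0}^{m-1}(q^k - q^i)` and `C(l,j)_q = 0` for `j < 0` or `j > l`. -/
theorem twPow_mul_twPow {K : Type*} [Field K] [CharZero K] (q ξ : K)
    (hq : ∀ m : ℕ, 0 < m → q ^ m ≠ 1) (l k : ℕ) :
    twPow q ξ l * twPow q ξ k =
      ∑ n ∈ Finset.range (l + k + 1),
        Polynomial.C ((if k ≤ n then qChoose q l (n - k) else 0) *
          (∏ i ∈ Finset.range (l + k - n), (q ^ k - q ^ i)) * ξ ^ (l + k - n)) *
          twPow q ξ n := by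
  have main : ∀ l, twPow q ξ l * twPow q ξ k =
      ∑ n ∈ Finset.range (l + k + 1), Polynomial.C (coefC q ξ l k n) * twPow q ξ n := by
    intro l
    induction l with
    | zero =>
      simp only [Nat.zero_add]
      rw [Finset.sum_range_succ]
      have h0 : ∀ n ∈ Finset.range k, Polynomial.C (coefC q ξ 0 k n) * twPow q ξ n = 0 := by
        intro n hn
        rw [Finset.mem_range] at hn
        rw [coefC, if_neg (by omega)]
        simp
      rw [Finset.sum_eq_zero h0]
      have : coefC q ξ 0 k k = 1 := by
        rw [coefC, if_pos le_rfl, Nat.sub_self]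
        simp [qChoose, qFact]
      rw [this]
      simp [twPow]
    | succ l ih =>
      have step : twPow q ξ (l + 1) * twPow q ξ k =
          (twPow q ξ l * twPow q ξ k) * (X - C (q ^ l * ξ)) := by
        rw [twPow_succ]; ring
      rw [step, ih, Finset.sum_mul]
      have expand : ∀ n, (Polynomial.C (coefC q ξ l k n) * twPow q ξ n) * (X - C (q ^ l * ξ))
          = Polynomial.C (coefC q ξ l k n) * twPow q ξ (n + 1)
            + Polynomial.C (coefC q ξ l k n * ((q ^ n - q ^ l) * ξ)) * twPow q ξ n := by
        intro n
        rw [mul_assoc, twPow_mul_lin, mul_add, ← mul_assoc, ← map_mul]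
      simp only [expand]
      rw [Finset.sum_add_distrib]
      -- RHS
      have hr : ∑ n ∈ Finset.range (l + 1 + k + 1), Polynomial.C (coefC q ξ (l + 1) k n) * twPow q ξ n
          = ∑ n ∈ Finset.range (l + k + 1), Polynomial.C (coefC q ξ (l + 1) k (n + 1)) * twPow q ξ (n + 1)
            + Polynomial.C (coefC q ξ (l + 1) k 0) * twPow q ξ 0 := by
        have : l + 1 + k + 1 = (l + k + 1) + 1 := by omega
        rw [this, Finset.sum_range_succ']
      rw [hr]
      have hterm : ∀ n, Polynomial.C (coefC q ξ (l + 1) k (n + 1)) * twPow q ξ (n + 1)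
          = Polynomial.C (coefC q ξ l k n) * twPow q ξ (n + 1)
            + Polynomial.C (coefC q ξ l k (n + 1) * ((q ^ (n + 1) - q ^ l) * ξ)) * twPow q ξ (n + 1) := by
        intro n
        rw [coefC_key q ξ hq, map_add, add_mul, map_mul]
      simp only [hterm]
      rw [Finset.sum_add_distrib]
      have h2 : ∑ n ∈ Finset.range ((l + k + 1) + 1),
            Polynomial.C (coefC q ξ l k n * ((q ^ n - q ^ l) * ξ)) * twPow q ξ n
          = ∑ n ∈ Finset.range (l + k + 1),
            Polynomial.C (coefC q ξ l k n * ((q ^ n - q ^ l) * ξ)) * twPow q ξ n := by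
        rw [Finset.sum_range_succ, coefC_top]
        simp
      have h3 : ∑ n ∈ Finset.range (l + k + 1),
            Polynomial.C (coefC q ξ l k n * ((q ^ n - q ^ l) * ξ)) * twPow q ξ n
          = ∑ n ∈ Finset.range (l + k + 1),
              Polynomial.C (coefC q ξ l k (n + 1) * ((q ^ (n + 1) - q ^ l) * ξ)) * twPow q ξ (n + 1)
            + Polynomial.C (coefC q ξ (l + 1) k 0) * twPow q ξ 0 := by
        rw [← h2, Finset.sum_range_succ', coefC_zero_succ q ξ hq]
      linear_combination h3
  rw [main l]
  rfl
end

section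
/- Let q with |q|=1, |q-1| < ρ ≤ |(q-1)ξ| and suppose ξ ≠ 0. If n₀ is the smallest positive integer with |(q^{n₀}-1)ξ| ≤ ρ, then for all k ≥ 1: |(q^{k n₀}-1)ξ| ≤ ρ, and for 1 ≤ r ≤ n₀-1, |(q^{k n₀ + r} - 1)ξ| = max(|(q^{k n₀}-1)ξ|, |(q^r - 1)ξ|) > ρ. -/
/-- Small-divisor estimates: if `n₀` is the smallest positive integer with
`|(q^{n₀}-1)ξ| ≤ ρ`, then for all `k ≥ 1`, `|(q^{k n₀}-1)ξ| ≤ ρ`, and for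
`1 ≤ r ≤ n₀ - 1`,
`|(q^{k n₀ + r}-1)ξ| = max(|(q^{k n₀}-1)ξ|, |(q^r-1)ξ|) > ρ`. -/
theorem small_divisor_orbit {K : Type*} [NontriviallyNormedField K] [IsUltrametricDist K]
    (q ξ : K) (hq : ‖q‖ = 1) (hroot : ∀ n : ℕ, 0 < n → q ^ n ≠ 1) (hξ : ξ ≠ 0)
    (ρ : ℝ) (hρ1 : ‖q - 1‖ < ρ) (hρ2 : ρ ≤ ‖(q - 1) * ξ‖)
    (n₀ : ℕ) (hn₀pos : 0 < n₀) (hn₀ : ‖(q ^ n₀ - 1) * ξ‖ ≤ ρ)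
    (hn₀min : ∀ m : ℕ, 0 < m → m < n₀ → ρ < ‖(q ^ m - 1) * ξ‖) :
    ∀ k : ℕ, 1 ≤ k →
      ‖(q ^ (k * n₀) - 1) * ξ‖ ≤ ρ ∧
      ∀ r : ℕ, 1 ≤ r → r ≤ n₀ - 1 →
        ‖(q ^ (k * n₀ + r) - 1) * ξ‖ =
            max ‖(q ^ (k * n₀) - 1) * ξ‖ ‖(q ^ r - 1) * ξ‖ ∧
        ρ < ‖(q ^ (k * n₀ + r) - 1) * ξ‖ := by
  -- key identity: (q^(a+b) - 1)ξ = q^a * ((q^b-1)ξ) + (q^a-1)ξ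
  have key : ∀ a b : ℕ, (q ^ (a + b) - 1) * ξ = q ^ a * ((q ^ b - 1) * ξ) + (q ^ a - 1) * ξ := by
    intro a b; rw [pow_add]; ring
  have hqn : ∀ a : ℕ, ‖q ^ a‖ = 1 := by
    intro a; rw [norm_pow, hq, one_pow]
  -- part 1 by induction
  have part1 : ∀ k : ℕ, 1 ≤ k → ‖(q ^ (k * n₀) - 1) * ξ‖ ≤ ρ := by
    intro k hk
    induction k with
    | zero => omega
    | succ k ih =>
      rcases Nat.eq_or_lt_of_le hk with h | h
      · simpa [← h] using hn₀
      · have hk1 : 1 ≤ k := by omega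
        have := ih hk1
        have : ‖(q ^ (k * n₀ + n₀) - 1) * ξ‖ ≤ ρ := by
          rw [key]
          refine le_trans (IsUltrametricDist.norm_add_le_max _ _) (max_le ?_ this)
          rw [norm_mul, hqn, one_mul]; exact hn₀
        simpa [Nat.succ_mul] using this
  intro k hk
  refine ⟨part1 k hk, fun r hr1 hr2 => ?_⟩
  have hrlt : r < n₀ := by omega
  have hrρ : ρ < ‖(q ^ r - 1) * ξ‖ := hn₀min r hr1 hrlt
  have h1 : ‖(q ^ (k * n₀) - 1) * ξ‖ ≤ ρ := part1 k hk
  have hne : ‖q ^ (k * n₀) * ((q ^ r - 1) * ξ)‖ ≠ ‖(q ^ (k * n₀) - 1) * ξ‖ := by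
    rw [norm_mul, hqn, one_mul]
    exact fun h => absurd (h ▸ h1) (not_le.mpr hrρ)
  have heq := IsUltrametricDist.norm_add_eq_max_of_norm_ne_norm hne
  constructor
  · rw [key, heq, norm_mul, hqn, one_mul, max_comm]
  · rw [key, heq, norm_mul, hqn, one_mul]
    exact lt_max_of_lt_left hrρ
end
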